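/- arXiv:1607.07584 — 2 statements merged into one kernel-verified Lean document; each statement's English description precedes it below -/
import Mathlib

section
/- Let c ∈ ℝ and let (α,β) ∈ ℝ² be such that (α,β) ∉ Σ_K, i.e. the only weak solution of the Fučik equation for (α,β) is the trivial one. If (u_j) is a sequence in X₀ with E_{α,β}(u_j) ≤ c for all j and sup{|⟨E_{α,β}'(u_j), φ⟩| : φ ∈ X₀, ‖φ‖ = 1} → 0 as j → ∞, then (u_j) is bounded in X₀. -/
/-
If `‖u_j‖` were unbounded, normalise `v_j = u_j / ‖u_j‖`. Since `f` is bounded, the perturbation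
`f(u) + h` is bounded in `L²`, so the Palais–Smale condition keeps the gradient `∇J(u_j)` of the
positively homogeneous functional `J_{α,β}` bounded, whence `∇J(v_j) → 0`. In the identity
`v = ∇J(v) + T*(α (Tv)⁺ - β (Tv)⁻)` the compact embedding `T` makes the last term converge along a
subsequence, so `v_j` converges strongly to a unit vector `v`, and `∇J(v) = 0` by continuity:
`v` is a nontrivial solution of the Fučik equation.
-/

open MeasureTheory RealInnerProductSpace Filter Topology

/-- The functional `J_{α,β}(u) = ½(B(u,u) - α∫_Ω (u⁺)² - β∫_Ω (u⁻)²)`, where the Hilbert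
space `X₀` carries the Gagliardo-type inner product `B = ⟪·,·⟫` and `T : X₀ → L²(Ω)` is the
embedding into `L²(Ω)`; note `∫_Ω (u⁺)² = ‖(Tu)⁺‖²_{L²}`. -/
noncomputable def Jfun {Ω : Type*} [MeasurableSpace Ω] {μ : Measure Ω}
    {X₀ : Type*} [NormedAddCommGroup X₀] [InnerProductSpace ℝ X₀]
    (T : X₀ →ₗ[ℝ] Lp ℝ 2 μ) (α β : ℝ) (u : X₀) : ℝ :=
  (⟪u, u⟫ - α * ‖Lp.posPart (T u)‖ ^ 2 - β * ‖Lp.negPart (T u)‖ ^ 2) / 2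

/-- The pairing `⟨J'_{α,β}(u), v⟩ = B(u,v) - α∫_Ω u⁺v + β∫_Ω u⁻v` of the Fréchet
derivative of `J_{α,β}`. -/
noncomputable def DJfun {Ω : Type*} [MeasurableSpace Ω] {μ : Measure Ω}
    {X₀ : Type*} [NormedAddCommGroup X₀] [InnerProductSpace ℝ X₀]
    (T : X₀ →ₗ[ℝ] Lp ℝ 2 μ) (α β : ℝ) (u v : X₀) : ℝ :=
  ⟪u, v⟫ - α * ⟪Lp.posPart (T u), T v⟫ + β * ⟪Lp.negPart (T u), T v⟫

/-- The functional `E_{α,β}(u) = J_{α,β}(u) - ∫_Ω (F(u) + h u)`, with `F(t) = ∫₀ᵗ f`. -/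
noncomputable def Efun {Ω : Type*} [MeasurableSpace Ω] {μ : Measure Ω}
    {X₀ : Type*} [NormedAddCommGroup X₀] [InnerProductSpace ℝ X₀]
    (T : X₀ →ₗ[ℝ] Lp ℝ 2 μ) (f : ℝ → ℝ) (h : Lp ℝ 2 μ) (α β : ℝ) (u : X₀) : ℝ :=
  Jfun T α β u - ∫ x, ((∫ τ in (0:ℝ)..((T u) x), f τ) + h x * (T u) x) ∂μ

/-- The pairing `⟨E'_{α,β}(u), v⟩ = ⟨J'_{α,β}(u), v⟩ - ∫_Ω (f(u)+h) v`. -/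
noncomputable def DEfun {Ω : Type*} [MeasurableSpace Ω] {μ : Measure Ω}
    {X₀ : Type*} [NormedAddCommGroup X₀] [InnerProductSpace ℝ X₀]
    (T : X₀ →ₗ[ℝ] Lp ℝ 2 μ) (f : ℝ → ℝ) (h : Lp ℝ 2 μ) (α β : ℝ) (u v : X₀) : ℝ :=
  DJfun T α β u v - ∫ x, (f ((T u) x) + h x) * (T v) x ∂μ

/-- `u` is a weak solution of the Fučik equation `-L_K u = α u⁺ - β u⁻` for `(α,β)`:
`B(u,v) = ∫_Ω (α u⁺ - β u⁻) v` for all `v ∈ X₀`.  The pair `(α,β)` belongs to the Fučik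
spectrum `Σ_K` iff this has a nontrivial solution. -/
noncomputable def FucikSol {Ω : Type*} [MeasurableSpace Ω] {μ : Measure Ω}
    {X₀ : Type*} [NormedAddCommGroup X₀] [InnerProductSpace ℝ X₀]
    (T : X₀ →ₗ[ℝ] Lp ℝ 2 μ) (α β : ℝ) (u : X₀) : Prop :=
  ∀ v : X₀, ⟪u, v⟫ = α * ⟪Lp.posPart (T u), T v⟫ - β * ⟪Lp.negPart (T u), T v⟫

def IsSeqCompactMap {X F : Type*} [Norm X] [SeminormedAddCommGroup F] (T : X → F) : Prop :=
  ∀ (u : ℕ → X) (C : ℝ), (∀ j, ‖u j‖ ≤ C) →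
    ∃ (w : F) (σ : ℕ → ℕ), StrictMono σ ∧ Tendsto (fun j => ‖T (u (σ j)) - w‖) atTop (𝓝 0)

theorem LinearMap.exists_bound_of_isSeqCompactMap {𝕜 E F : Type*} [NontriviallyNormedField 𝕜]
    [NormedAddCommGroup E] [NormedSpace 𝕜 E] [NormedAddCommGroup F] [NormedSpace 𝕜 F]
    {T : E →ₗ[𝕜] F} (hT : IsSeqCompactMap T) : ∃ C, ∀ x, ‖T x‖ ≤ C * ‖x‖ := by
  obtain ⟨c, hc⟩ : ∃ c, ∀ x ∈ Metric.ball (0 : E) 1, ‖T x‖ ≤ c := by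
    by_contra! h
    choose x hx hTx using fun j : ℕ => h j
    obtain ⟨w, σ, hσ, hw⟩ := hT x 1 fun j => (mem_ball_zero_iff.mp (hx j)).le
    have hlim : Tendsto (fun j => ‖T (x (σ j))‖) atTop (𝓝 ‖w‖) :=
      (tendsto_iff_norm_sub_tendsto_zero.mpr hw).norm
    refine not_tendsto_atTop_of_tendsto_nhds hlim (tendsto_atTop_mono (fun j => ?_)
      tendsto_natCast_atTop_atTop)
    exact (Nat.cast_le.mpr hσ.le_apply).trans (hTx (σ j)).le
  exact T.bound_of_ball_bound one_pos c hc

theorem MeasureTheory.Lp.posPart_smul_of_nonneg {Ω : Type*} [MeasurableSpace Ω] {μ : Measure Ω}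
    {p : ENNReal} {r : ℝ} (hr : 0 ≤ r) (a : Lp ℝ p μ) :
    Lp.posPart (r • a) = r • Lp.posPart a := by
  apply Lp.ext
  filter_upwards [Lp.coeFn_posPart (r • a), Lp.coeFn_smul r a,
    Lp.coeFn_smul r (Lp.posPart a), Lp.coeFn_posPart a] with x h1 h2 h3 h4
  rw [h1, h2, h3, Pi.smul_apply, Pi.smul_apply, h4, smul_eq_mul, smul_eq_mul,
    mul_max_of_nonneg _ _ hr, mul_zero]

theorem MeasureTheory.Lp.negPart_smul_of_nonneg {Ω : Type*} [MeasurableSpace Ω] {μ : Measure Ω}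
    {p : ENNReal} {r : ℝ} (hr : 0 ≤ r) (a : Lp ℝ p μ) :
    Lp.negPart (r • a) = r • Lp.negPart a := by
  rw [Lp.negPart, Lp.negPart, ← smul_neg, Lp.posPart_smul_of_nonneg hr]

theorem exists_forall_abs_integral_comp_add_mul_le {Ω : Type*} [MeasurableSpace Ω]
    {μ : Measure Ω} [IsFiniteMeasure μ] {f : ℝ → ℝ} (hf : Measurable f)
    (hfb : ∃ Mf : ℝ, ∀ t, |f t| ≤ Mf) (h : Lp ℝ 2 μ) :
    ∃ M, 0 ≤ M ∧ ∀ g φ : Lp ℝ 2 μ, |∫ x, (f (g x) + h x) * φ x ∂μ| ≤ M * ‖φ‖ := by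
  obtain ⟨Mf, hMf⟩ := hfb
  have hMf0 : 0 ≤ Mf := (abs_nonneg _).trans (hMf 0)
  have hmem : ∀ g : Lp ℝ 2 μ, MemLp (fun x => f (g x)) 2 μ := fun g =>
    .of_bound (hf.comp_aemeasurable (Lp.aestronglyMeasurable g).aemeasurable).aestronglyMeasurable
      Mf (Eventually.of_forall fun x => hMf _)
  refine ⟨measureUnivNNReal μ ^ (2 : ENNReal).toReal⁻¹ * Mf + ‖h‖, by positivity, fun g φ => ?_⟩
  have hint : ∫ x, (f (g x) + h x) * φ x ∂μ = ⟪(hmem g).toLp _ + h, φ⟫ := by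
    rw [L2.inner_def]
    refine integral_congr_ae ?_
    filter_upwards [Lp.coeFn_add ((hmem g).toLp _) h, (hmem g).coeFn_toLp] with x h1 h2
    rw [h1, Pi.add_apply, h2, RCLike.inner_apply, conj_trivial, mul_comm]
  rw [hint]
  refine (abs_real_inner_le_norm _ _).trans (mul_le_mul_of_nonneg_right ?_ (norm_nonneg _))
  refine (norm_add_le _ _).trans (add_le_add_left ?_ _)
  exact Lp.norm_le_of_ae_bound hMf0 ((hmem g).coeFn_toLp.mono fun x hx => hx ▸ hMf _)

theorem norm_le_of_forall_norm_eq_one_abs_inner_le {X : Type*} [NormedAddCommGroup X]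
    [InnerProductSpace ℝ X] {x : X} {C : ℝ} (hC : 0 ≤ C)
    (h : ∀ φ : X, ‖φ‖ = 1 → |⟪x, φ⟫| ≤ C) : ‖x‖ ≤ C := by
  rcases eq_or_ne x 0 with rfl | hx
  · simpa using hC
  simpa [real_inner_smul_right, real_inner_self_eq_norm_sq, abs_of_nonneg, pow_two,
    inv_mul_cancel_left₀ (norm_ne_zero_iff.mpr hx)] using h _ (norm_smul_inv_norm (𝕜 := ℝ) hx)

section FucikGradient

open ContinuousLinearMap

variable {Ω : Type*} [MeasurableSpace Ω] {μ : Measure Ω}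
  {X : Type*} [NormedAddCommGroup X] [InnerProductSpace ℝ X] [CompleteSpace X]
  (T : X →L[ℝ] Lp ℝ 2 μ) (α β : ℝ)

noncomputable def fucikGrad (u : X) : X :=
  u - adjoint T (α • Lp.posPart (T u) - β • Lp.negPart (T u))

variable {T α β}

theorem inner_fucikGrad (u φ : X) :
    ⟪fucikGrad T α β u, φ⟫ = DJfun (T : X →ₗ[ℝ] Lp ℝ 2 μ) α β u φ := by
  simp only [fucikGrad, DJfun, inner_sub_left, adjoint_inner_left, real_inner_smul_left, coe_coe]
  ring

theorem fucikSol_of_fucikGrad_eq_zero {u : X} (hu : fucikGrad T α β u = 0) :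
    FucikSol (T : X →ₗ[ℝ] Lp ℝ 2 μ) α β u := fun φ => by
  have := inner_fucikGrad (T := T) (α := α) (β := β) u φ
  rw [hu, inner_zero_left, DJfun] at this
  linarith

theorem norm_fucikGrad_le {u : X} {C : ℝ} (hC : 0 ≤ C)
    (h : ∀ φ : X, ‖φ‖ = 1 → |DJfun (T : X →ₗ[ℝ] Lp ℝ 2 μ) α β u φ| ≤ C) :
    ‖fucikGrad T α β u‖ ≤ C :=
  norm_le_of_forall_norm_eq_one_abs_inner_le hC fun φ hφ => by rw [inner_fucikGrad]; exact h φ hφ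

theorem fucikGrad_smul_of_nonneg {r : ℝ} (hr : 0 ≤ r) (u : X) :
    fucikGrad T α β (r • u) = r • fucikGrad T α β u := by
  rw [fucikGrad, fucikGrad, map_smul, Lp.posPart_smul_of_nonneg hr, Lp.negPart_smul_of_nonneg hr,
    smul_comm α r, smul_comm β r, ← smul_sub, map_smul, ← smul_sub]

theorem continuous_adjoint_posPart_sub_negPart :
    Continuous fun a : Lp ℝ 2 μ => adjoint T (α • Lp.posPart a - β • Lp.negPart a) :=
  (adjoint T).continuous.comp
    ((Lp.continuous_posPart.const_smul α).sub (Lp.continuous_negPart.const_smul β))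

theorem continuous_fucikGrad : Continuous (fucikGrad T α β) :=
  continuous_id.sub (continuous_adjoint_posPart_sub_negPart.comp T.continuous)

theorem exists_norm_eq_one_fucikGrad_eq_zero (hT : IsSeqCompactMap T) {u : ℕ → X} {C : ℝ}
    (hgrad : ∀ k, ‖fucikGrad T α β (u k)‖ ≤ C) (hu : Tendsto (fun k => ‖u k‖) atTop atTop) :
    ∃ v : X, ‖v‖ = 1 ∧ fucikGrad T α β v = 0 := by
  set v : ℕ → X := fun k => ‖u k‖⁻¹ • u k
  have hv_norm : ∀ᶠ k in atTop, ‖v k‖ = 1 := (hu.eventually_gt_atTop 0).mono fun k hk =>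
    norm_smul_inv_norm (norm_pos_iff.mp hk)
  have hv_le : ∀ k, ‖v k‖ ≤ 1 := fun k => by
    rcases eq_or_ne (u k) 0 with hk | hk
    · simp [v, hk]
    · exact (norm_smul_inv_norm hk).le
  obtain ⟨w, σ, hσ, hw⟩ := hT v 1 hv_le
  have hTv : Tendsto (fun k => T (v (σ k))) atTop (𝓝 w) :=
    tendsto_iff_norm_sub_tendsto_zero.mpr hw
  have hgrad_v : Tendsto (fun k => fucikGrad T α β (v k)) atTop (𝓝 0) := by
    refine squeeze_zero_norm (fun k => ?_) (by simpa using hu.inv_tendsto_atTop.mul_const C)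
    rw [fucikGrad_smul_of_nonneg (inv_nonneg.mpr (norm_nonneg _)), norm_smul, norm_inv,
      norm_norm]
    exact mul_le_mul_of_nonneg_left (hgrad k) (inv_nonneg.mpr (norm_nonneg _))
  have hv_lim : Tendsto (fun k => v (σ k)) atTop
      (𝓝 (0 + adjoint T (α • Lp.posPart w - β • Lp.negPart w))) := by
    refine ((hgrad_v.comp hσ.tendsto_atTop).add
      ((continuous_adjoint_posPart_sub_negPart.tendsto w).comp hTv)).congr fun k => ?_
    simp [fucikGrad]
  refine ⟨_, tendsto_nhds_unique hv_lim.norm ?_, tendsto_nhds_unique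
    ((continuous_fucikGrad.tendsto _).comp hv_lim) (hgrad_v.comp hσ.tendsto_atTop)⟩
  exact tendsto_const_nhds.congr' ((hσ.tendsto_atTop.eventually hv_norm).mono fun k hk => hk.symm)

theorem exists_forall_norm_le_of_fucikGrad_le (hT : IsSeqCompactMap T)
    (hnot : ¬∃ v : X, v ≠ 0 ∧ FucikSol (T : X →ₗ[ℝ] Lp ℝ 2 μ) α β v) {u : ℕ → X} {C : ℝ}
    (hgrad : ∀ᶠ j in atTop, ‖fucikGrad T α β (u j)‖ ≤ C) : ∃ B, ∀ j, ‖u j‖ ≤ B := by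
  suffices IsBoundedUnder (· ≤ ·) atTop fun j => ‖u j‖ by
    obtain ⟨B, hB⟩ := this.bddAbove_range
    exact ⟨B, fun j => hB ⟨j, rfl⟩⟩
  by_contra hunb
  have hfreq : ∀ n : ℕ, ∃ᶠ j in atTop, (n : ℝ) < ‖u j‖ ∧ ‖fucikGrad T α β (u j)‖ ≤ C := by
    intro n
    refine Frequently.and_eventually ?_ hgrad
    have : ¬∀ᶠ j in atTop, ‖u j‖ ≤ n := fun h => hunb ⟨n, h⟩
    simpa only [not_eventually, not_le] using this
  obtain ⟨ψ, -, hψ⟩ := extraction_forall_of_frequently hfreq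
  obtain ⟨v, hv1, hv0⟩ := exists_norm_eq_one_fucikGrad_eq_zero hT (fun k => (hψ k).2)
    (tendsto_atTop_mono (fun k => (hψ k).1.le) tendsto_natCast_atTop_atTop)
  exact hnot ⟨v, norm_ne_zero_iff.mp (hv1 ▸ one_ne_zero), fucikSol_of_fucikGrad_eq_zero hv0⟩

end FucikGradient

theorem stmt_16_general
    {n : ℕ}
    {Ωs : Set (EuclideanSpace ℝ (Fin n))} (hΩb : Bornology.IsBounded Ωs)
    {X₀ : Type*} [NormedAddCommGroup X₀] [InnerProductSpace ℝ X₀] [CompleteSpace X₀]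
    (T : X₀ →ₗ[ℝ] Lp ℝ 2 (volume.restrict Ωs))
    (f : ℝ → ℝ) (hfc : Continuous f) (hfb : ∃ Mf : ℝ, ∀ t : ℝ, |f t| ≤ Mf)
    (h : Lp ℝ 2 (volume.restrict Ωs))
    (hcpt : ∀ (u : ℕ → X₀) (C : ℝ), (∀ j, ‖u j‖ ≤ C) →
      ∃ (w : Lp ℝ 2 (volume.restrict Ωs)) (σ : ℕ → ℕ), StrictMono σ ∧
        Tendsto (fun j => ‖T (u (σ j)) - w‖) atTop (nhds 0))
    {α β : ℝ}
    (hnotspec : ¬∃ u : X₀, u ≠ 0 ∧ FucikSol T α β u)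
    (u : ℕ → X₀)
    (hPS : ∀ ε > 0, ∃ N : ℕ, ∀ j ≥ N, ∀ φ : X₀, ‖φ‖ = 1 → |DEfun T f h α β (u j) φ| ≤ ε)
    :
    ∃ C : ℝ, ∀ j, ‖u j‖ ≤ C := by
  have : IsFiniteMeasure (volume.restrict Ωs) :=
    isFiniteMeasure_restrict.mpr hΩb.measure_lt_top.ne
  let Tc : X₀ →L[ℝ] Lp ℝ 2 (volume.restrict Ωs) :=
    T.mkContinuousOfExistsBound (LinearMap.exists_bound_of_isSeqCompactMap hcpt)
  obtain ⟨M, hM0, hM⟩ := exists_forall_abs_integral_comp_add_mul_le hfc.measurable hfb h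
  obtain ⟨N, hN⟩ := hPS 1 one_pos
  refine exists_forall_norm_le_of_fucikGrad_le (T := Tc) hcpt hnotspec (C := 1 + M * ‖Tc‖)
    (eventually_atTop.mpr ⟨N, fun j hj => norm_fucikGrad_le (by positivity) fun φ hφ => ?_⟩)
  set dJ := DJfun T α β (u j) φ
  set dE := DEfun T f h α β (u j) φ with hdE
  have hpert : |dJ - dE| ≤ M * ‖Tc φ‖ := by
    rw [hdE, DEfun, sub_sub_cancel]
    exact hM _ _
  calc |dJ| = |dE + (dJ - dE)| := by rw [add_sub_cancel]
    _ ≤ |dE| + |dJ - dE| := abs_add_le _ _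
    _ ≤ 1 + M * ‖Tc‖ := by
        gcongr
        · exact hN j hj φ hφ
        · simpa [hφ] using hpert.trans (mul_le_mul_of_nonneg_left (Tc.le_opNorm φ) hM0)

theorem stmt_16
    {n : ℕ} {s : ℝ} (hs0 : 0 < s) (hs1 : s < 1) (hns : 2 * s < (n : ℝ))
    {Ωs : Set (EuclideanSpace ℝ (Fin n))} (hΩb : Bornology.IsBounded Ωs)
    (hΩm : MeasurableSet Ωs)
    {K : EuclideanSpace ℝ (Fin n) → ℝ} (hKpos : ∀ x, x ≠ 0 → 0 < K x)
    (hK1 : Integrable (fun x => min (‖x‖ ^ 2) 1 * K x))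
    (hK2 : ∃ lam > 0, ∀ x, x ≠ 0 → lam * ‖x‖ ^ (-((n : ℝ) + 2 * s)) ≤ K x)
    (hK3 : ∀ x, K (-x) = K x)
    {X₀ : Type*} [NormedAddCommGroup X₀] [InnerProductSpace ℝ X₀] [CompleteSpace X₀]
    (T : X₀ →ₗ[ℝ] Lp ℝ 2 (volume.restrict Ωs)) (hT : Function.Injective T)
    (f : ℝ → ℝ) (hfc : Continuous f) (hfb : ∃ Mf : ℝ, ∀ t : ℝ, |f t| ≤ Mf)
    (h : Lp ℝ 2 (volume.restrict Ωs))
    (hcpt : ∀ (u : ℕ → X₀) (C : ℝ), (∀ j, ‖u j‖ ≤ C) →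
      ∃ (w : Lp ℝ 2 (volume.restrict Ωs)) (σ : ℕ → ℕ), StrictMono σ ∧
        Tendsto (fun j => ‖T (u (σ j)) - w‖) atTop (nhds 0))
    {α β : ℝ} (c : ℝ)
    (hnotspec : ¬∃ u : X₀, u ≠ 0 ∧ FucikSol T α β u)
    (u : ℕ → X₀) (hEb : ∀ j, Efun T f h α β (u j) ≤ c)
    (hPS : ∀ ε > 0, ∃ N : ℕ, ∀ j ≥ N, ∀ φ : X₀, ‖φ‖ = 1 → |DEfun T f h α β (u j) φ| ≤ ε)
    :
    ∃ C : ℝ, ∀ j, ‖u j‖ ≤ C :=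
  stmt_16_general hΩb T f hfc hfb h hcpt hnotspec u hPS
end

section
/- Let (α,β) ∈ ℝ² and let (u_j) be a bounded sequence in X₀ such that sup{|⟨E_{α,β}'(u_j), φ⟩| : φ ∈ X₀, ‖φ‖ = 1} → 0 as j → ∞. Then there exists u₀ ∈ X₀ such that, up to a subsequence, ‖u_j − u₀‖ → 0 as j → ∞. -/
/-!
Write `E'(u)φ = ⟪u, φ⟫ - ⟪R(Tu), Tφ⟫`, where `R(F) = αF⁺ - βF⁻ + f∘F + h` is the reaction term
in `L²(Ω)`. For `d = u_m - u_k`, testing `E'(u_m) - E'(u_k)` against `d` gives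
`‖d‖² = E'(u_m)d - E'(u_k)d + ⟪R(Tu_m) - R(Tu_k), Td⟫`. The first two terms are small because
`(u_j)` is bounded and a Palais–Smale sequence. By the compact embedding, a subsequence has
`Tu_j` convergent in `L²` and a.e.; then `R(Tu_j)` converges too (by continuity of `F ↦ F^±` and
dominated convergence for `f∘F`), so the last term is small and the subsequence is Cauchy.
-/

open MeasureTheory RealInnerProductSpace Filter Topology

open scoped BoundedContinuousFunction

section PalaisSmale

variable {X Y : Type*} [NormedAddCommGroup X] [InnerProductSpace ℝ X]
  [NormedAddCommGroup Y] [InnerProductSpace ℝ Y] (T : X →ₗ[ℝ] Y)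

theorem abs_inner_sub_inner_le_mul_norm {x : X} {r : Y} {ε : ℝ}
    (h : ∀ φ : X, ‖φ‖ = 1 → |⟪x, φ⟫ - ⟪r, T φ⟫| ≤ ε) (φ : X) :
    |⟪x, φ⟫ - ⟪r, T φ⟫| ≤ ε * ‖φ‖ := by
  rcases eq_or_ne φ 0 with rfl | hφ
  · simp
  have hunit := h _ (norm_smul_inv_norm (𝕜 := ℝ) hφ)
  rw [map_smul, real_inner_smul_right, real_inner_smul_right, ← mul_sub, abs_mul, abs_inv,
    RCLike.ofReal_real_eq_id, id, abs_norm, inv_mul_le_iff₀ (norm_pos_iff.2 hφ)] at hunit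
  linarith

theorem tendsto_inner_sub_inner_of_bounded {ι : Type*} {l : Filter ι} {x : ℕ → X} {r : ℕ → Y}
    (hPS : ∀ ε > 0, ∀ᶠ j in atTop, ∀ φ : X, ‖φ‖ = 1 → |⟪x j, φ⟫ - ⟪r j, T φ⟫| ≤ ε)
    {g : ι → ℕ} (hg : Tendsto g l atTop) {d : ι → X} {B : ℝ} (hd : ∀ i, ‖d i‖ ≤ B) :
    Tendsto (fun i => ⟪x (g i), d i⟫ - ⟪r (g i), T (d i)⟫) l (𝓝 0) := by
  rw [Metric.tendsto_nhds]
  intro ε hε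
  have hB : 0 < |B| + 1 := by positivity
  filter_upwards [hg.eventually (hPS (ε / (|B| + 1)) (by positivity))] with i hi
  rw [Real.dist_0_eq_abs]
  calc |⟪x (g i), d i⟫ - ⟪r (g i), T (d i)⟫|
      ≤ ε / (|B| + 1) * ‖d i‖ := abs_inner_sub_inner_le_mul_norm T hi (d i)
    _ ≤ ε / (|B| + 1) * |B| := by gcongr; exact (hd i).trans (le_abs_self B)
    _ < ε := by rw [div_mul_eq_mul_div, div_lt_iff₀ hB]; nlinarith

theorem cauchySeq_of_inner_sub_inner {v : ℕ → X} {r : ℕ → Y} {C : ℝ} (hb : ∀ j, ‖v j‖ ≤ C)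
    (hTv : CauchySeq fun j => T (v j)) (hr : CauchySeq r)
    (hPS : ∀ ε > 0, ∀ᶠ j in atTop, ∀ φ : X, ‖φ‖ = 1 → |⟪v j, φ⟫ - ⟪r j, T φ⟫| ≤ ε) :
    CauchySeq v := by
  rw [cauchySeq_iff_tendsto_dist_atTop_0] at hTv hr ⊢
  rw [← prod_atTop_atTop_eq] at hTv hr ⊢
  set d : ℕ × ℕ → X := fun p => v p.1 - v p.2
  have hd : ∀ p, ‖d p‖ ≤ C + C := fun p => (norm_sub_le _ _).trans (add_le_add (hb _) (hb _))
  have hsplit : ∀ p : ℕ × ℕ, ‖d p‖ ^ 2 = (⟪v p.1, d p⟫ - ⟪r p.1, T (d p)⟫)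
      - (⟪v p.2, d p⟫ - ⟪r p.2, T (d p)⟫) + ⟪r p.1 - r p.2, T (v p.1) - T (v p.2)⟫ := by
    intro p
    rw [← real_inner_self_eq_norm_sq, ← map_sub]
    simp only [d, inner_sub_left]
    ring
  have hcross : Tendsto (fun p : ℕ × ℕ => ⟪r p.1 - r p.2, T (v p.1) - T (v p.2)⟫)
      (atTop ×ˢ atTop) (𝓝 0) := by
    refine squeeze_zero_norm (fun p => norm_inner_le_norm _ _) ?_
    simpa only [dist_eq_norm, mul_zero] using hr.mul hTv
  have hsq : Tendsto (fun p => ‖d p‖ ^ 2) (atTop ×ˢ atTop) (𝓝 0) := by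
    simp only [hsplit]
    simpa using ((tendsto_inner_sub_inner_of_bounded T hPS tendsto_fst hd).sub
      (tendsto_inner_sub_inner_of_bounded T hPS tendsto_snd hd)).add hcross
  simpa [dist_eq_norm, Real.sqrt_sq (norm_nonneg _)] using hsq.sqrt

end PalaisSmale

namespace BoundedContinuousFunction

variable {Ω E F : Type*} [MeasurableSpace Ω] {μ : Measure Ω} [IsFiniteMeasure μ]
  [NormedAddCommGroup E] [NormedAddCommGroup F] {p : ENNReal}

theorem memLp_comp (g : E →ᵇ F) (u : Lp E p μ) : MemLp (fun x => g (u x)) p μ :=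
  .of_bound (g.continuous.comp_aestronglyMeasurable (Lp.aestronglyMeasurable u)) ‖g‖
    (.of_forall fun _ => g.norm_coe_le_norm _)

noncomputable def compLp (g : E →ᵇ F) (u : Lp E p μ) : Lp F p μ :=
  (g.memLp_comp u).toLp _

theorem coeFn_compLp (g : E →ᵇ F) (u : Lp E p μ) : g.compLp u =ᵐ[μ] fun x => g (u x) :=
  (g.memLp_comp u).coeFn_toLp

theorem unifIntegrable_comp [Fact (1 ≤ p)] (hp : p ≠ ⊤) (g : E →ᵇ F) (u : ℕ → Lp E p μ) :
    UnifIntegrable (fun j x => g (u j x)) p μ := by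
  refine unifIntegrable_of Fact.out hp (fun j => (g.memLp_comp (u j)).1) fun _ _ =>
    ⟨‖g‖₊ + 1, fun j => ?_⟩
  have hempty : {x | ‖g‖₊ + 1 ≤ ‖g (u j x)‖₊} = ∅ := by
    refine Set.eq_empty_of_forall_notMem fun x hx => ?_
    have := g.norm_coe_le_norm (u j x)
    change ‖g‖₊ + 1 ≤ ‖g (u j x)‖₊ at hx
    simp only [← NNReal.coe_le_coe, NNReal.coe_add, coe_nnnorm, NNReal.coe_one] at hx
    linarith
  simp [hempty]

theorem tendsto_compLp [Fact (1 ≤ p)] (hp : p ≠ ⊤) (g : E →ᵇ F) {u : ℕ → Lp E p μ}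
    {w : Lp E p μ} (hae : ∀ᵐ x ∂μ, Tendsto (fun j => u j x) atTop (𝓝 (w x))) :
    Tendsto (fun j => g.compLp (u j)) atTop (𝓝 (g.compLp w)) :=
  (Lp.tendsto_Lp_iff_tendsto_eLpNorm'' _ _ _ _).2 <|
    tendsto_Lp_finite_of_tendsto_ae Fact.out hp (fun j => (g.memLp_comp (u j)).1)
      (g.memLp_comp w) (g.unifIntegrable_comp hp u)
      (hae.mono fun _ hx => (g.continuous.tendsto _).comp hx)

end BoundedContinuousFunction

section Reaction

variable {Ω : Type*} [MeasurableSpace Ω] {μ : Measure Ω} [IsFiniteMeasure μ]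

noncomputable def reactionTerm (α β : ℝ) (g : ℝ →ᵇ ℝ) (h F : Lp ℝ 2 μ) : Lp ℝ 2 μ :=
  α • Lp.posPart F - β • Lp.negPart F + (g.compLp F + h)

theorem inner_compLp_add (g : ℝ →ᵇ ℝ) (h F G : Lp ℝ 2 μ) :
    ⟪g.compLp F + h, G⟫ = ∫ x, (g (F x) + h x) * G x ∂μ := by
  rw [L2.inner_def]
  refine integral_congr_ae ?_
  filter_upwards [Lp.coeFn_add (g.compLp F) h, g.coeFn_compLp F] with x hadd hcomp
  rw [hadd, Pi.add_apply, hcomp, real_inner_eq_re_inner, RCLike.inner_apply]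
  simp [mul_comm]

theorem DEfun_eq_inner_sub_inner_reactionTerm {X₀ : Type*} [NormedAddCommGroup X₀]
    [InnerProductSpace ℝ X₀] (T : X₀ →ₗ[ℝ] Lp ℝ 2 μ) (g : ℝ →ᵇ ℝ) (h : Lp ℝ 2 μ) (α β : ℝ)
    (u φ : X₀) : DEfun T g h α β u φ = ⟪u, φ⟫ - ⟪reactionTerm α β g h (T u), T φ⟫ := by
  rw [DEfun, DJfun, reactionTerm, inner_add_left, inner_compLp_add, inner_sub_left,
    real_inner_smul_left, real_inner_smul_left]
  ring

theorem tendsto_reactionTerm (α β : ℝ) (g : ℝ →ᵇ ℝ) (h : Lp ℝ 2 μ) {F : ℕ → Lp ℝ 2 μ}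
    {w : Lp ℝ 2 μ} (hF : Tendsto F atTop (𝓝 w))
    (hae : ∀ᵐ x ∂μ, Tendsto (fun j => F j x) atTop (𝓝 (w x))) :
    Tendsto (fun j => reactionTerm α β g h (F j)) atTop (𝓝 (reactionTerm α β g h w)) :=
  ((((Lp.continuous_posPart.tendsto w).comp hF).const_smul α).sub
    (((Lp.continuous_negPart.tendsto w).comp hF).const_smul β)).add
    ((g.tendsto_compLp ENNReal.ofNat_ne_top hae).add_const h)

end Reaction

theorem stmt_17_general
    {n : ℕ}
    {Ωs : Set (EuclideanSpace ℝ (Fin n))} (hΩb : Bornology.IsBounded Ωs)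
    {X₀ : Type*} [NormedAddCommGroup X₀] [InnerProductSpace ℝ X₀] [CompleteSpace X₀]
    (T : X₀ →ₗ[ℝ] Lp ℝ 2 (volume.restrict Ωs))
    (f : ℝ → ℝ) (hfc : Continuous f) (hfb : ∃ Mf : ℝ, ∀ t : ℝ, |f t| ≤ Mf)
    (h : Lp ℝ 2 (volume.restrict Ωs))
    (hcpt : ∀ (u : ℕ → X₀) (C : ℝ), (∀ j, ‖u j‖ ≤ C) →
      ∃ (w : Lp ℝ 2 (volume.restrict Ωs)) (σ : ℕ → ℕ), StrictMono σ ∧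
        Tendsto (fun j => ‖T (u (σ j)) - w‖) atTop (nhds 0))
    {α β : ℝ}
    (u : ℕ → X₀) (hb : ∃ C : ℝ, ∀ j, ‖u j‖ ≤ C)
    (hPS : ∀ ε > 0, ∃ N : ℕ, ∀ j ≥ N, ∀ φ : X₀, ‖φ‖ = 1 → |DEfun T f h α β (u j) φ| ≤ ε)
    :
    ∃ (u₀ : X₀) (σ : ℕ → ℕ), StrictMono σ ∧
      Tendsto (fun j => ‖u (σ j) - u₀‖) atTop (nhds 0) := by
  obtain ⟨M, hM⟩ := hfb
  let g : ℝ →ᵇ ℝ := .ofNormedAddCommGroup f hfc M hM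
  have : IsFiniteMeasure (volume.restrict Ωs) :=
    isFiniteMeasure_restrict.2 hΩb.measure_lt_top.ne
  obtain ⟨C, hC⟩ := hb
  obtain ⟨w, σ, hσ, hTw⟩ := hcpt u C hC
  replace hTw : Tendsto (fun j => T (u (σ j))) atTop (𝓝 w) :=
    tendsto_iff_norm_sub_tendsto_zero.2 hTw
  obtain ⟨τ, hτ, hae⟩ := (tendstoInMeasure_of_tendsto_Lp hTw).exists_seq_tendsto_ae
  have hTv : Tendsto (fun j => T (u (σ (τ j)))) atTop (𝓝 w) := hTw.comp hτ.tendsto_atTop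
  have hcauchy : CauchySeq fun j => u (σ (τ j)) := by
    refine cauchySeq_of_inner_sub_inner T (fun j => hC _) hTv.cauchySeq
      (tendsto_reactionTerm α β g h hTv hae).cauchySeq fun ε hε => ?_
    filter_upwards [(hσ.comp hτ).tendsto_atTop.eventually (eventually_atTop.2 (hPS ε hε))]
      with j hj φ hφ
    rw [← DEfun_eq_inner_sub_inner_reactionTerm]
    exact hj φ hφ
  obtain ⟨u₀, hu₀⟩ := cauchySeq_tendsto_of_complete hcauchy
  exact ⟨u₀, σ ∘ τ, hσ.comp hτ, tendsto_iff_norm_sub_tendsto_zero.1 hu₀⟩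

theorem stmt_17
    {n : ℕ} {s : ℝ} (hs0 : 0 < s) (hs1 : s < 1) (hns : 2 * s < (n : ℝ))
    {Ωs : Set (EuclideanSpace ℝ (Fin n))} (hΩb : Bornology.IsBounded Ωs)
    (hΩm : MeasurableSet Ωs)
    {K : EuclideanSpace ℝ (Fin n) → ℝ} (hKpos : ∀ x, x ≠ 0 → 0 < K x)
    (hK1 : Integrable (fun x => min (‖x‖ ^ 2) 1 * K x))
    (hK2 : ∃ lam > 0, ∀ x, x ≠ 0 → lam * ‖x‖ ^ (-((n : ℝ) + 2 * s)) ≤ K x)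
    (hK3 : ∀ x, K (-x) = K x)
    {X₀ : Type*} [NormedAddCommGroup X₀] [InnerProductSpace ℝ X₀] [CompleteSpace X₀]
    (T : X₀ →ₗ[ℝ] Lp ℝ 2 (volume.restrict Ωs)) (hT : Function.Injective T)
    (f : ℝ → ℝ) (hfc : Continuous f) (hfb : ∃ Mf : ℝ, ∀ t : ℝ, |f t| ≤ Mf)
    (h : Lp ℝ 2 (volume.restrict Ωs))
    (hcpt : ∀ (u : ℕ → X₀) (C : ℝ), (∀ j, ‖u j‖ ≤ C) →
      ∃ (w : Lp ℝ 2 (volume.restrict Ωs)) (σ : ℕ → ℕ), StrictMono σ ∧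
        Tendsto (fun j => ‖T (u (σ j)) - w‖) atTop (nhds 0))
    {α β : ℝ}
    (u : ℕ → X₀) (hb : ∃ C : ℝ, ∀ j, ‖u j‖ ≤ C)
    (hPS : ∀ ε > 0, ∃ N : ℕ, ∀ j ≥ N, ∀ φ : X₀, ‖φ‖ = 1 → |DEfun T f h α β (u j) φ| ≤ ε)
    :
    ∃ (u₀ : X₀) (σ : ℕ → ℕ), StrictMono σ ∧
      Tendsto (fun j => ‖u (σ j) - u₀‖) atTop (nhds 0) :=
  stmt_17_general hΩb T f hfc hfb h hcpt u hb hPS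
end
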